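/- arXiv:1807.00297 — 2 statements merged into one kernel-verified Lean document; each statement's English description precedes it below -/
import Mathlib

section
/- For every positive integer L, the square function φ(x) = x² on [−1,1] satisfies dist(φ, F_{L,2}(ℝ)) ≤ 2^{−2L}, i.e., there exists f in the neural-net class F_{L,2}(ℝ) with |x² − f(x)| ≤ 2^{−2L} for all x ∈ [−1,1]. -/
noncomputable section

/-- `f : ℝ^d → ℝ` belongs to the neural-net class `F_{L,M}(ℝ^d)`. -/
def NNClass (d L M : ℕ) (f : (Fin d → ℝ) → ℝ) : Prop :=
  ∃ y : Fin L → Fin M → (Fin d → ℝ) → ℝ,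
    (∀ (h0 : 0 < L) (m : Fin M), ∃ (w : Fin d → ℝ) (b : ℝ),
      ∀ x, y ⟨0, h0⟩ m x = max (b + ∑ i, w i * x i) 0) ∧
    (∀ (l : ℕ) (hl : l + 1 < L) (m : Fin M),
      ∃ (w : Fin d → ℝ) (v : Fin M → ℝ) (b : ℝ),
      ∀ x, y ⟨l + 1, hl⟩ m x =
        max (b + ∑ i, w i * x i + ∑ j, v j * y ⟨l, Nat.lt_of_succ_lt hl⟩ j x) 0) ∧
    (∃ (w : Fin d → ℝ) (c : Fin L → Fin M → ℝ) (b : ℝ),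
      ∀ x, f x = b + ∑ i, w i * x i + ∑ l, ∑ m, c l m * y l m x)

/-!
Yarotsky's sawtooth construction. The tooth function `g(u) = 2u` on `[0, 1/2]`, `2 - 2u` on
`[1/2, 1]` maps `[0,1]` onto itself and satisfies `g(u)² - g(u) = 4 (u² - u) + g(u)` there, so by
induction `u² - (u - ∑_{k=1}^{n} gᵏ(u) / 4ᵏ) = (v² - v) / 4ⁿ` with `v = gⁿ(u) ∈ [0,1]`, an error of
at most `4^{-(n+1)}`. A ReLU net of width two computes `|x| = relu x + relu (-x)` in its first
layer and then, layer by layer, the pairs `relu (v - 1/2)`, `relu v` for `v = gᵏ(|x|)`, from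
which `g(v) = 2 relu v - 4 relu (v - 1/2)` is read off linearly.
-/

open Finset Set

theorem NNClass.of_nat_layers {d L M : ℕ} (y : ℕ → Fin M → (Fin d → ℝ) → ℝ)
    (h_first : ∀ m, ∃ (w : Fin d → ℝ) (b : ℝ), ∀ x, y 0 m x = max (b + ∑ i, w i * x i) 0)
    (h_succ : ∀ l, l + 1 < L → ∀ m, ∃ (w : Fin d → ℝ) (v : Fin M → ℝ) (b : ℝ),
      ∀ x, y (l + 1) m x = max (b + ∑ i, w i * x i + ∑ j, v j * y l j x) 0)
    {f : (Fin d → ℝ) → ℝ}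
    (h_out : ∃ (w : Fin d → ℝ) (c : ℕ → Fin M → ℝ) (b : ℝ),
      ∀ x, f x = b + ∑ i, w i * x i + ∑ l ∈ range L, ∑ m, c l m * y l m x) :
    NNClass d L M f := by
  obtain ⟨w, c, b, hf⟩ := h_out
  refine ⟨fun l m => y l m, fun _ => h_first, fun l hl => h_succ l hl,
    w, fun l m => c l m, b, fun x => ?_⟩
  rw [hf, Fin.sum_univ_eq_sum_range (fun l => ∑ m, c l m * y l m x)]

namespace SquareApprox

def tooth (u : ℝ) : ℝ := 2 * max u 0 - 4 * max (u - 1 / 2) 0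

lemma tooth_of_le_half {u : ℝ} (h₀ : 0 ≤ u) (h : u ≤ 1 / 2) : tooth u = 2 * u := by
  rw [tooth, max_eq_left h₀, max_eq_right (by linarith)]
  ring

lemma tooth_of_half_le {u : ℝ} (h : 1 / 2 ≤ u) : tooth u = 2 - 2 * u := by
  rw [tooth, max_eq_left (by linarith), max_eq_left (by linarith)]
  ring

lemma mapsTo_tooth : MapsTo tooth (Icc 0 1) (Icc 0 1) := by
  rintro u ⟨h₀, h₁⟩
  rcases le_total u (1 / 2) with h | h
  · rw [tooth_of_le_half h₀ h]; constructor <;> linarith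
  · rw [tooth_of_half_le h]; constructor <;> linarith

lemma tooth_sq_sub_tooth {u : ℝ} (hu : u ∈ Icc (0 : ℝ) 1) :
    tooth u ^ 2 - tooth u = 4 * (u ^ 2 - u) + tooth u := by
  rcases le_total u (1 / 2) with h | h
  · rw [tooth_of_le_half hu.1 h]; ring
  · rw [tooth_of_half_le h]; ring

def sqApprox (n : ℕ) (u : ℝ) : ℝ := u - ∑ k ∈ range n, tooth^[k + 1] u / 4 ^ (k + 1)

lemma sq_sub_sqApprox (n : ℕ) {u : ℝ} (hu : u ∈ Icc (0 : ℝ) 1) :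
    u ^ 2 - sqApprox n u = ((tooth^[n] u) ^ 2 - tooth^[n] u) / 4 ^ n := by
  induction n with
  | zero => simp [sqApprox]
  | succ n ih =>
    have hv := mapsTo_tooth.iterate n hu
    have h_step : sqApprox (n + 1) u = sqApprox n u - tooth (tooth^[n] u) / 4 ^ (n + 1) := by
      rw [sqApprox, sqApprox, sum_range_succ, Function.iterate_succ_apply']
      ring
    rw [h_step, Function.iterate_succ_apply', tooth_sq_sub_tooth hv, pow_succ]
    linear_combination ih

lemma abs_sq_sub_sqApprox_le (n : ℕ) {u : ℝ} (hu : u ∈ Icc (0 : ℝ) 1) :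
    |u ^ 2 - sqApprox n u| ≤ (1 / 4) ^ (n + 1) := by
  obtain ⟨hv₀, hv₁⟩ := mapsTo_tooth.iterate n hu
  set v := tooth^[n] u
  have hv : |v ^ 2 - v| ≤ 1 / 4 := abs_le.2 ⟨by nlinarith [sq_nonneg (v - 1 / 2)], by nlinarith⟩
  rw [sq_sub_sqApprox n hu, abs_div, abs_of_pos (by positivity : (0 : ℝ) < 4 ^ n)]
  calc |v ^ 2 - v| / 4 ^ n ≤ 1 / 4 / 4 ^ n := by gcongr
    _ = (1 / 4) ^ (n + 1) := by rw [pow_succ, one_div_pow]; ring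

def neuron : ℕ → Fin 2 → ℝ → ℝ
  | 0, m, t => max (![1, -1] m * t) 0
  | k + 1, m, t => max (![-1 / 2, 0] m + tooth^[k] |t|) 0

def readout : ℕ → Fin 2 → ℝ
  | 0 => ![1, 1]
  | _ + 1 => ![-4, 2]

lemma iterate_tooth_abs_eq_sum (k : ℕ) (t : ℝ) :
    tooth^[k] |t| = ∑ m, readout k m * neuron k m t := by
  cases k with
  | zero =>
    simp [readout, neuron, Fin.sum_univ_two, max_zero_add_max_neg_zero_eq_abs_self]
  | succ k =>
    simp only [readout, neuron, Fin.sum_univ_two, Function.iterate_succ_apply', tooth,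
      Matrix.cons_val_zero, Matrix.cons_val_one, zero_add, neg_div, neg_add_eq_sub]
    ring

def outputCoeff : ℕ → Fin 2 → ℝ
  | 0, m => readout 0 m
  | k + 1, m => -readout (k + 1) m / 4 ^ (k + 1)

lemma sum_outputCoeff_mul_neuron (n : ℕ) (t : ℝ) :
    ∑ l ∈ range (n + 1), ∑ m, outputCoeff l m * neuron l m t = sqApprox n |t| := by
  have h_layer (k : ℕ) : ∑ m, outputCoeff (k + 1) m * neuron (k + 1) m t =
      -(tooth^[k + 1] |t| / 4 ^ (k + 1)) := by
    rw [iterate_tooth_abs_eq_sum, sum_div, ← sum_neg_distrib]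
    refine sum_congr rfl fun m _ => ?_
    rw [outputCoeff]
    ring
  rw [sum_range_succ', sum_congr rfl fun k _ => h_layer k, sum_neg_distrib, sqApprox]
  simp only [outputCoeff, ← iterate_tooth_abs_eq_sum 0, Function.iterate_zero_apply]
  ring

lemma nnClass_sqApprox (n : ℕ) : NNClass 1 (n + 1) 2 (fun x => sqApprox n |x 0|) := by
  refine NNClass.of_nat_layers (fun l m x => neuron l m (x 0)) (fun m => ?_) (fun l _ m => ?_) ?_
  · exact ⟨fun _ => ![1, -1] m, 0, fun x => by simp [neuron]⟩
  · refine ⟨0, readout l, ![-1 / 2, 0] m, fun x => ?_⟩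
    simp only [Pi.zero_apply, zero_mul, sum_const_zero, add_zero]
    rw [neuron, iterate_tooth_abs_eq_sum]
  · refine ⟨0, outputCoeff, 0, fun x => ?_⟩
    simp only [Pi.zero_apply, zero_mul, sum_const_zero, zero_add, sum_outputCoeff_mul_neuron]

end SquareApprox

open SquareApprox

/-- The square function `x ↦ x²` on `[-1,1]` is approximated by the neural-net class
`F_{L,2}(ℝ)` with error at most `2^{-2L}`: there exists `f ∈ F_{L,2}(ℝ)` with
`|x² − f(x)| ≤ 2^{-2L}` for all `x ∈ [-1,1]`. -/
theorem square_approx (L : ℕ) (hL : 0 < L) :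
    ∃ f : (Fin 1 → ℝ) → ℝ, NNClass 1 L 2 f ∧
      ∀ x ∈ Set.Icc (-1 : ℝ) 1, |x ^ 2 - f (fun _ => x)| ≤ (2 : ℝ) ^ (-(2 * L : ℤ)) := by
  obtain ⟨n, rfl⟩ : ∃ n, L = n + 1 := Nat.exists_eq_add_one.2 hL
  refine ⟨fun x => sqApprox n |x 0|, nnClass_sqApprox n, fun x hx => ?_⟩
  have h_abs : |x| ∈ Icc (0 : ℝ) 1 := ⟨abs_nonneg x, abs_le.2 hx⟩
  have h_rate : (2 : ℝ) ^ (-(2 * (n + 1 : ℕ) : ℤ)) = (1 / 4) ^ (n + 1) := by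
    rw [zpow_neg, show 2 * ((n + 1 : ℕ) : ℤ) = ((2 * (n + 1) : ℕ) : ℤ) by push_cast; ring,
      zpow_natCast, pow_mul]
    norm_num [one_div_pow]
  rw [h_rate, ← sq_abs x]
  exact abs_sq_sub_sqApprox_le n h_abs
end
end

section
/- For every positive integer L, the multiplication function φ(x,y) = xy on [−1,1]² satisfies dist(φ, F_{3L,2}(ℝ²)) ≤ 3 · 2^{−2L}, i.e., there exists f in the neural-net class F_{3L,2}(ℝ²) with |xy − f(x,y)| ≤ 3 · 2^{−2L} for all (x,y) ∈ [−1,1]². -/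
/-! On `[0, 1]` the tent map `g` satisfies `g t + (g t - (g t)²) = 4 (t - t²)`, so iterating gives
Yarotsky's expansion `t - t² = ∑_{k=1}^{L} g^[k] t / 4^k + r` with `0 ≤ r ≤ 4^{-(L+1)}`. Each
truncated sum is a width-2 ReLU network of depth `L`. Since `xy = 4((s - s²) - (t - t²))` for
`s = (x - y + 2)/4` and `t = (x + y + 2)/4` in `[0, 1]`, and the inputs reach every layer so two
networks can be stacked, depth `2L` already gives error at most `4^{-L}`. -/

noncomputable section

open Finset

/-- Hidden units of a network of unbounded depth; `NNClass d L M` reads off the first `L` layers. -/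
def IsReLUStack (d M : ℕ) (y : ℕ → Fin M → (Fin d → ℝ) → ℝ) : Prop :=
  (∀ m, ∃ (w : Fin d → ℝ) (b : ℝ), ∀ x, y 0 m x = max (b + ∑ i, w i * x i) 0) ∧
  ∀ l m, ∃ (w : Fin d → ℝ) (v : Fin M → ℝ) (b : ℝ),
    ∀ x, y (l + 1) m x = max (b + ∑ i, w i * x i + ∑ j, v j * y l j x) 0

namespace IsReLUStack

variable {d M : ℕ} {y₁ y₂ : ℕ → Fin M → (Fin d → ℝ) → ℝ}

theorem zero : IsReLUStack d M 0 :=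
  ⟨fun _ => ⟨0, 0, fun _ => by simp⟩, fun _ _ => ⟨0, 0, 0, fun _ => by simp⟩⟩

theorem append (h₁ : IsReLUStack d M y₁) (h₂ : IsReLUStack d M y₂) (L₁ : ℕ) :
    IsReLUStack d M (fun l => if l < L₁ then y₁ l else y₂ (l - L₁)) := by
  refine ⟨fun m => ?_, fun l m => ?_⟩
  · by_cases h : 0 < L₁
    · simpa only [if_pos h] using h₁.1 m
    · simpa only [if_neg h, Nat.zero_sub] using h₂.1 m
  · rcases lt_trichotomy (l + 1) L₁ with h | h | h
    · simpa only [if_pos h, if_pos (Nat.lt_of_succ_lt h)] using h₁.2 l m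
    · obtain ⟨w, b, hw⟩ := h₂.1 m
      exact ⟨w, 0, b, fun x => by simp [h, hw]⟩
    · have hl : ¬ l < L₁ := by omega
      simpa only [if_neg h.not_gt, if_neg hl, Nat.sub_add_comm (Nat.le_of_not_gt hl)]
        using h₂.2 (l - L₁) m

end IsReLUStack

namespace NNClass

variable {d L M : ℕ} {f g : (Fin d → ℝ) → ℝ}

theorem iff_exists_isReLUStack : NNClass d L M f ↔ ∃ y, IsReLUStack d M y ∧
    ∃ (w : Fin d → ℝ) (c : ℕ → Fin M → ℝ) (b : ℝ),
      ∀ x, f x = b + ∑ i, w i * x i + ∑ l ∈ range L, ∑ m, c l m * y l m x := by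
  constructor
  · rintro ⟨y, h0, hs, w, c, b, hf⟩
    refine ⟨fun l m x => if h : l < L then y ⟨l, h⟩ m x else 0, ⟨fun m => ?_, fun l m => ?_⟩,
      w, fun l m => if h : l < L then c ⟨l, h⟩ m else 0, b, fun x => ?_⟩
    · by_cases h : 0 < L
      · simpa only [dif_pos h] using h0 h m
      · exact ⟨0, 0, fun x => by simp [h]⟩
    · by_cases h : l + 1 < L
      · simpa only [dif_pos h, dif_pos (Nat.lt_of_succ_lt h)] using hs l h m
      · exact ⟨0, 0, 0, fun x => by simp [h]⟩
    · rw [hf, sum_range]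
      simp
  · rintro ⟨y, ⟨h0, hs⟩, w, c, b, hf⟩
    exact ⟨fun l => y l, fun _ => h0, fun l _ => hs l, w, fun l => c l, b,
      fun x => by rw [hf, sum_range]⟩

theorem add (hf : NNClass d L M f) {L' : ℕ} (hg : NNClass d L' M g) :
    NNClass d (L + L') M (fun x => f x + g x) := by
  obtain ⟨y₁, hy₁, w₁, c₁, b₁, hf⟩ := iff_exists_isReLUStack.1 hf
  obtain ⟨y₂, hy₂, w₂, c₂, b₂, hg⟩ := iff_exists_isReLUStack.1 hg
  refine iff_exists_isReLUStack.2 ⟨_, hy₁.append hy₂ L, w₁ + w₂,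
    fun l => if l < L then c₁ l else c₂ (l - L), b₁ + b₂, fun x => ?_⟩
  have head : ∀ l ∈ range L, ∑ m, (if l < L then c₁ l else c₂ (l - L)) m *
      (if l < L then y₁ l else y₂ (l - L)) m x = ∑ m, c₁ l m * y₁ l m x := fun l hl => by
    simp [mem_range.1 hl]
  rw [hf, hg, sum_range_add, sum_congr rfl head]
  simp only [Pi.add_apply, add_mul, sum_add_distrib, add_lt_iff_neg_left, not_lt_zero,
    if_false, Nat.add_sub_cancel_left]
  ring

theorem zero : NNClass d L M 0 :=
  iff_exists_isReLUStack.2 ⟨0, IsReLUStack.zero, 0, 0, 0, fun _ => by simp⟩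

theorem mono (hf : NNClass d L M f) {L' : ℕ} (h : L ≤ L') : NNClass d L' M f := by
  obtain ⟨K, rfl⟩ := Nat.exists_eq_add_of_le h
  simpa using hf.add (zero (L := K))

theorem const_mul (hf : NNClass d L M f) (a : ℝ) : NNClass d L M (fun x => a * f x) := by
  obtain ⟨y, hy, w, c, b, hf⟩ := iff_exists_isReLUStack.1 hf
  refine iff_exists_isReLUStack.2 ⟨y, hy, a • w, a • c, a * b, fun x => ?_⟩
  simp only [hf, Pi.smul_apply, smul_eq_mul, mul_add, mul_sum, mul_assoc]

theorem sub (hf : NNClass d L M f) {L' : ℕ} (hg : NNClass d L' M g) :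
    NNClass d (L + L') M (fun x => f x - g x) := by
  simpa [sub_eq_add_neg] using hf.add (hg.const_mul (-1))

end NNClass

def tent (u : ℝ) : ℝ := 2 * max u 0 - 4 * max (u - 1 / 2) 0

theorem tent_mapsTo : Set.MapsTo tent (Set.Icc 0 1) (Set.Icc 0 1) := by
  rintro u ⟨h0, h1⟩
  unfold tent
  rcases le_total u (1 / 2) with h | h
  · rw [max_eq_left h0, max_eq_right (by linarith)]
    constructor <;> linarith
  · rw [max_eq_left h0, max_eq_left (by linarith)]
    constructor <;> linarith

theorem tent_add_sub_sq_tent {u : ℝ} (hu : u ∈ Set.Icc (0 : ℝ) 1) :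
    tent u + (tent u - tent u ^ 2) = 4 * (u - u ^ 2) := by
  obtain ⟨h0, h1⟩ := hu
  unfold tent
  rcases le_total u (1 / 2) with h | h
  · rw [max_eq_left h0, max_eq_right (by linarith)]
    ring
  · rw [max_eq_left h0, max_eq_left (by linarith)]
    ring

theorem sub_sq_mem_Icc {u : ℝ} (hu : u ∈ Set.Icc (0 : ℝ) 1) : u - u ^ 2 ∈ Set.Icc 0 (1 / 4) :=
  ⟨by nlinarith [hu.1, hu.2], by nlinarith [sq_nonneg (u - 1 / 2)]⟩

def sawtoothSum (L : ℕ) (t : ℝ) : ℝ := ∑ k ∈ range L, tent^[k + 1] t / 4 ^ (k + 1)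

theorem sawtoothSum_succ (L : ℕ) (t : ℝ) :
    sawtoothSum (L + 1) t = sawtoothSum L t + tent^[L + 1] t / 4 ^ (L + 1) :=
  sum_range_succ _ _

theorem sub_sq_eq_sawtoothSum_add {t : ℝ} (ht : t ∈ Set.Icc (0 : ℝ) 1) (L : ℕ) :
    t - t ^ 2 = sawtoothSum L t + (tent^[L] t - (tent^[L] t) ^ 2) / 4 ^ L := by
  induction L with
  | zero => simp [sawtoothSum]
  | succ L ih =>
    have hstep := tent_add_sub_sq_tent (tent_mapsTo.iterate L ht)
    rw [ih, sawtoothSum_succ, Function.iterate_succ_apply']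
    linear_combination (-1 / 4 ^ (L + 1) : ℝ) * hstep

theorem sub_sq_sub_sawtoothSum_mem_Icc {t : ℝ} (ht : t ∈ Set.Icc (0 : ℝ) 1) (L : ℕ) :
    t - t ^ 2 - sawtoothSum L t ∈ Set.Icc 0 (1 / 4 ^ (L + 1)) := by
  obtain ⟨h0, h1⟩ := sub_sq_mem_Icc (tent_mapsTo.iterate L ht)
  rw [sub_sq_eq_sawtoothSum_add ht L, add_sub_cancel_left, pow_succ]
  constructor
  · positivity
  · rw [div_le_div_iff₀ (by positivity) (by positivity)]
    nlinarith [pow_pos (by norm_num : (0 : ℝ) < 4) L]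

/-- Layer `l` holds `relu(g)` and `relu(g - 1/2)` for `g = tent^[l] u`, so the next layer can
form `tent g` linearly and the output collects `tent^[l+1] u / 4^(l+1)`. -/
theorem NNClass.sawtoothSum_affine {d : ℕ} (L : ℕ) {u : (Fin d → ℝ) → ℝ} (w : Fin d → ℝ)
    (b : ℝ) (hu : ∀ x, u x = b + ∑ i, w i * x i) :
    NNClass d L 2 (fun x => sawtoothSum L (u x)) := by
  simp only [hu]
  have tent_eq (t : ℝ) :
      tent t = 2 * max (t - ![0, 1 / 2] 0) 0 - 4 * max (t - ![0, 1 / 2] 1) 0 := by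
    simp [tent]
  refine NNClass.iff_exists_isReLUStack.2
    ⟨fun l m x => max (tent^[l] (b + ∑ i, w i * x i) - ![0, 1 / 2] m) 0,
      ⟨fun m => ?_, fun l m => ?_⟩, 0, fun l m => ![2, -4] m / 4 ^ (l + 1), 0, fun x => ?_⟩
  · exact ⟨w, b - ![0, 1 / 2] m, fun x => by
      simp only [Function.iterate_zero_apply, add_sub_right_comm]⟩
  · refine ⟨0, ![2, -4], -![0, 1 / 2] m, fun x => ?_⟩
    simp only [Function.iterate_succ_apply', tent_eq, Fin.sum_univ_two, Pi.zero_apply, zero_mul,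
      sum_const_zero, add_zero, Matrix.cons_val_zero, Matrix.cons_val_one, Matrix.cons_val_fin_one]
    ring_nf
  · simp only [sawtoothSum, Fin.sum_univ_two, Function.iterate_succ_apply', tent_eq,
      Pi.zero_apply, zero_mul, sum_const_zero, add_zero, zero_add, Matrix.cons_val_zero,
      Matrix.cons_val_one, Matrix.cons_val_fin_one]
    exact sum_congr rfl fun l _ => by ring

theorem abs_mul_sub_sawtoothSum_le {x y : ℝ} (hx : x ∈ Set.Icc (-1 : ℝ) 1)
    (hy : y ∈ Set.Icc (-1 : ℝ) 1) (L : ℕ) :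
    |x * y - (4 * sawtoothSum L ((x - y + 2) / 4) - 4 * sawtoothSum L ((x + y + 2) / 4))| ≤
      1 / 4 ^ L := by
  obtain ⟨hx₀, hx₁⟩ := hx
  obtain ⟨hy₀, hy₁⟩ := hy
  obtain ⟨hs₀, hs₁⟩ := sub_sq_sub_sawtoothSum_mem_Icc
    (t := (x - y + 2) / 4) ⟨by linarith, by linarith⟩ L
  obtain ⟨ht₀, ht₁⟩ := sub_sq_sub_sawtoothSum_mem_Icc
    (t := (x + y + 2) / 4) ⟨by linarith, by linarith⟩ L
  set s := (x - y + 2) / 4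
  set t := (x + y + 2) / 4
  have hmul : x * y - (4 * sawtoothSum L s - 4 * sawtoothSum L t) =
      4 * ((s - s ^ 2 - sawtoothSum L s) - (t - t ^ 2 - sawtoothSum L t)) := by
    simp only [s, t]
    ring
  calc |x * y - (4 * sawtoothSum L s - 4 * sawtoothSum L t)|
      = 4 * |(s - s ^ 2 - sawtoothSum L s) - (t - t ^ 2 - sawtoothSum L t)| := by
        rw [hmul, abs_mul, abs_of_pos four_pos]
    _ ≤ 4 * (1 / 4 ^ (L + 1)) := by gcongr; exact abs_sub_le_of_nonneg_of_le hs₀ hs₁ ht₀ ht₁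
    _ = 1 / 4 ^ L := by rw [pow_succ]; field_simp

theorem mul_approx_general (L : ℕ) :
    ∃ f : (Fin 2 → ℝ) → ℝ, NNClass 2 (3 * L) 2 f ∧
      ∀ x ∈ Set.Icc (-1 : ℝ) 1, ∀ y ∈ Set.Icc (-1 : ℝ) 1,
        |x * y - f ![x, y]| ≤ 3 * (2 : ℝ) ^ (-(2 * L : ℤ)) := by
  refine ⟨fun z => 4 * sawtoothSum L ((z 0 - z 1 + 2) / 4) -
    4 * sawtoothSum L ((z 0 + z 1 + 2) / 4), ?_, fun x hx y hy => ?_⟩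
  · have hs : NNClass 2 L 2 fun z => sawtoothSum L ((z 0 - z 1 + 2) / 4) :=
      NNClass.sawtoothSum_affine L ![1 / 4, -1 / 4] (1 / 2) fun z => by
        simp only [Fin.sum_univ_two, Matrix.cons_val_zero, Matrix.cons_val_one]
        ring
    have ht : NNClass 2 L 2 fun z => sawtoothSum L ((z 0 + z 1 + 2) / 4) :=
      NNClass.sawtoothSum_affine L ![1 / 4, 1 / 4] (1 / 2) fun z => by
        simp only [Fin.sum_univ_two, Matrix.cons_val_zero, Matrix.cons_val_one]
        ring
    exact ((hs.const_mul 4).sub (ht.const_mul 4)).mono (by omega)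
  · have h4 : (2 : ℝ) ^ (-(2 * L : ℤ)) = 1 / 4 ^ L := by
      rw [zpow_neg, ← one_div, zpow_mul, zpow_natCast]
      norm_num
    rw [h4]
    exact (abs_mul_sub_sawtoothSum_le hx hy L).trans
      (le_mul_of_one_le_left (by positivity) (by norm_num))

/-- The multiplication function `(x,y) ↦ xy` on `[-1,1]²` is approximated by the
neural-net class `F_{3L,2}(ℝ²)` with error at most `3·2^{-2L}`: there exists
`f ∈ F_{3L,2}(ℝ²)` with `|xy − f(x,y)| ≤ 3·2^{-2L}` for all `(x,y) ∈ [-1,1]²`. -/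
theorem mul_approx (L : ℕ) (hL : 0 < L) :
    ∃ f : (Fin 2 → ℝ) → ℝ, NNClass 2 (3 * L) 2 f ∧
      ∀ x ∈ Set.Icc (-1 : ℝ) 1, ∀ y ∈ Set.Icc (-1 : ℝ) 1,
        |x * y - f ![x, y]| ≤ 3 * (2 : ℝ) ^ (-(2 * L : ℤ)) :=
  mul_approx_general L
end
end
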